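/- If two likelihood functions on a parameter space Θ satisfy the multiplicative approximation |ḡ_n(S_n|θ) − g_n(S_n|θ)| ≤ g_n(S_n|θ) · C/m uniformly in θ ∈ Θ (for a constant C and simulation count m), then the total variation distance between the two corresponding posteriors with common prior density π satisfies ∫_Θ | π(θ)ḡ_n(S_n|θ)/∫π ḡ_n − π(θ)g_n(S_n|θ)/∫π g_n | dθ = O(1/m). -/

import Mathlib

open MeasureTheory Filter Topology Matrix

noncomputable section

/-- Euclidean norm on `Fin d → ℝ`. -/
def euclNorm {d : ℕ} (x : Fin d → ℝ) : ℝ := Real.sqrt (∑ i, x i ^ 2)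

/-- Quadratic form `xᵀ A x`. -/
def quadForm {d : ℕ} (A : Matrix (Fin d) (Fin d) ℝ) (x : Fin d → ℝ) : ℝ :=
  ∑ i, ∑ j, x i * A i j * x j

/-- Frobenius norm of a matrix. -/
def matNorm {d e : ℕ} (A : Matrix (Fin d) (Fin e) ℝ) : ℝ :=
  Real.sqrt (∑ i, ∑ j, A i j ^ 2)

/-- Density at `x` of the `d`-dimensional Gaussian distribution `N(b, S)`. -/
def gaussPdf {d : ℕ} (b : Fin d → ℝ) (S : Matrix (Fin d) (Fin d) ℝ)
    (x : Fin d → ℝ) : ℝ :=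
  (2 * Real.pi) ^ (-(d : ℝ) / 2) * S.det ^ (-(1 : ℝ) / 2) *
    Real.exp (-(1 / 2) * quadForm S⁻¹ (x - b))

/-- Smallest value of the quadratic form of `A` on the Euclidean unit sphere
(the minimal eigenvalue, for a symmetric matrix). -/
def lambdaMin {p : ℕ} (A : Matrix (Fin p) (Fin p) ℝ) : ℝ :=
  sInf {r : ℝ | ∃ v : Fin p → ℝ, euclNorm v = 1 ∧ r = quadForm A v}

/-- Gradient (vector of partial derivatives) of `f : ℝ^p → ℝ` at `θ`. -/
def gradVec {p : ℕ} (f : (Fin p → ℝ) → ℝ) (θ : Fin p → ℝ) : Fin p → ℝ :=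
  fun i => fderiv ℝ f θ (Pi.single i 1)

/-- Hessian matrix of `f : ℝ^p → ℝ` at `θ`. -/
def hessMat {p : ℕ} (f : (Fin p → ℝ) → ℝ) (θ : Fin p → ℝ) :
    Matrix (Fin p) (Fin p) ℝ :=
  fun i j => fderiv ℝ (fun θ' => gradVec f θ' j) θ (Pi.single i 1)

section Stochastic

variable {Ω : Type*} [MeasurableSpace Ω]

/-- `X n = O_p(a n)` under `P`. -/
def isOp (P : Measure Ω) (X : ℕ → Ω → ℝ) (a : ℕ → ℝ) : Prop :=
  ∀ ε : ℝ, 0 < ε → ∃ M : ℝ, 0 < M ∧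
    ∀ᶠ n in atTop, (P {ω | M * a n ≤ |X n ω|}).toReal ≤ ε

/-- `X n = o_p(a n)` under `P`. -/
def isLittleOp (P : Measure Ω) (X : ℕ → Ω → ℝ) (a : ℕ → ℝ) : Prop :=
  ∀ C : ℝ, 0 < C →
    Tendsto (fun n => (P {ω | C * a n ≤ |X n ω|}).toReal) atTop (𝓝 0)

/-- Convergence in probability to a constant. -/
def tendstoInProb (P : Measure Ω) (X : ℕ → Ω → ℝ) (c : ℝ) : Prop :=
  isLittleOp P (fun n ω => X n ω - c) (fun _ => 1)

/-- Convergence in distribution to the multivariate Gaussian `N(μ, V)`, stated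
through convergence of expectations of bounded continuous test functions. -/
def convToGauss (P : Measure Ω) {d : ℕ} (X : ℕ → Ω → (Fin d → ℝ))
    (μ : Fin d → ℝ) (V : Matrix (Fin d) (Fin d) ℝ) : Prop :=
  ∀ f : (Fin d → ℝ) → ℝ, Continuous f → (∃ M : ℝ, ∀ x, |f x| ≤ M) →
    Tendsto (fun n => ∫ ω, f (X n ω) ∂P) atTop
      (𝓝 (∫ x : Fin d → ℝ, f x * gaussPdf μ V x))

end Stochastic

private lemma setIntegral_mono_on'' {X : Type*} [MeasurableSpace X] {μ : Measure X}
    {s : Set X} {f h : X → ℝ} (hf : IntegrableOn f s μ) (hh : IntegrableOn h s μ)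
    (hle : ∀ x ∈ s, f x ≤ h x) :
    ∫ x in s, f x ∂μ ≤ ∫ x in s, h x ∂μ := by
  refine integral_mono_ae hf hh ?_
  set ν := μ.restrict s with hν
  have hfm : AEMeasurable f ν := hf.aemeasurable
  have hhm : AEMeasurable h ν := hh.aemeasurable
  have h1 : ν {x | ¬ f x = hfm.mk f x} = 0 := ae_iff.mp hfm.ae_eq_mk
  have h2 : ν {x | ¬ h x = hhm.mk h x} = 0 := ae_iff.mp hhm.ae_eq_mk
  obtain ⟨B1, hB1s, hB1m, hB1⟩ := exists_measurable_superset_of_null h1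
  obtain ⟨B2, hB2s, hB2m, hB2⟩ := exists_measurable_superset_of_null h2
  have hmeas : MeasurableSet {x | hhm.mk h x < hfm.mk f x} :=
    measurableSet_lt hhm.measurable_mk hfm.measurable_mk
  have key : ν {x | hhm.mk h x < hfm.mk f x} = 0 := by
    have h3 : ν {x | hhm.mk h x < hfm.mk f x} = μ ({x | hhm.mk h x < hfm.mk f x} ∩ s) :=
      Measure.restrict_apply hmeas
    have hsub : {x | hhm.mk h x < hfm.mk f x} ∩ s ⊆ (B1 ∪ B2) ∩ s := by
      rintro x ⟨hx, hxs⟩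
      refine ⟨?_, hxs⟩
      by_contra hB
      rw [Set.mem_union] at hB
      push_neg at hB
      have e1 : f x = hfm.mk f x := by
        by_contra hne; exact hB.1 (hB1s hne)
      have e2 : h x = hhm.mk h x := by
        by_contra hne; exact hB.2 (hB2s hne)
      have : h x < f x := by rw [e1, e2]; exact hx
      exact absurd (hle x hxs) (not_le.mpr this)
    have h4 : μ ((B1 ∪ B2) ∩ s) = 0 := by
      have h5 := Measure.restrict_apply (μ := μ) (s := s) (hB1m.union hB2m)
      rw [← hν] at h5
      rw [← h5]
      exact le_antisymm (le_trans (measure_union_le B1 B2) (by rw [hB1, hB2]; simp))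
        zero_le
    rw [h3]
    exact le_antisymm (h4 ▸ measure_mono hsub) zero_le
  have hmk : ∀ᵐ x ∂ν, hfm.mk f x ≤ hhm.mk h x := by
    rw [ae_iff]
    simpa [not_le] using key
  filter_upwards [hfm.ae_eq_mk, hhm.ae_eq_mk, hmk] with x e1 e2 hle'
  rw [e1, e2]; exact hle'

/-- **Posterior perturbation under a multiplicative likelihood
approximation.** If `|ḡ_m(S_n|θ) − g(S_n|θ)| ≤ g(S_n|θ) · C/m` uniformly in
`θ ∈ Θ`, then the total variation distance between the posteriors obtained
from `ḡ_m` and from `g`, with common prior density `π`, is `O(1/m)`. -/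
theorem posterior_perturbation_multiplicative
    {X : Type*} [MeasureSpace X] (Θ : Set X)
    (piDens g : X → ℝ) (gbar : ℕ → X → ℝ) (C : ℝ) (hC : 0 < C)
    (hπ : ∀ θ ∈ Θ, 0 ≤ piDens θ) (hg : ∀ θ ∈ Θ, 0 ≤ g θ)
    (happrox : ∀ m : ℕ, 1 ≤ m → ∀ θ ∈ Θ,
      |gbar m θ - g θ| ≤ g θ * (C / m))
    (hint : IntegrableOn (fun θ => piDens θ * g θ) Θ)
    (hpos : 0 < ∫ θ in Θ, piDens θ * g θ)
    (hintbar : ∀ m : ℕ, IntegrableOn (fun θ => piDens θ * gbar m θ) Θ)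
    (hposbar : ∀ m : ℕ, 1 ≤ m → 0 < ∫ θ in Θ, piDens θ * gbar m θ) :
    ∃ K : ℝ, 0 < K ∧ ∀ᶠ m in atTop,
      (∫ θ in Θ,
        |piDens θ * gbar m θ / (∫ θ' in Θ, piDens θ' * gbar m θ') -
          piDens θ * g θ / (∫ θ' in Θ, piDens θ' * g θ')|) ≤ K / m := by
  set I := ∫ θ in Θ, piDens θ * g θ with hIdef
  refine ⟨4 * C, by positivity, ?_⟩
  rw [eventually_atTop]
  refine ⟨max 1 ⌈2 * C⌉₊, fun m hm => ?_⟩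
  have hm1 : 1 ≤ m := le_trans (le_max_left _ _) hm
  have hmR : (0 : ℝ) < m := by exact_mod_cast hm1
  have h2C : 2 * C ≤ (m : ℝ) := by
    calc 2 * C ≤ (⌈2 * C⌉₊ : ℝ) := Nat.le_ceil _
      _ ≤ m := by exact_mod_cast le_trans (le_max_right _ _) hm
  set Im := ∫ θ in Θ, piDens θ * gbar m θ with hImdef
  have hImpos : 0 < Im := hposbar m hm1
  have hintd : IntegrableOn (fun θ => piDens θ * gbar m θ - piDens θ * g θ) Θ :=
    (hintbar m).sub hint
  set J := ∫ θ in Θ, |piDens θ * gbar m θ - piDens θ * g θ| with hJdef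
  have hJle : J ≤ C / m * I := by
    have h1 : ∀ θ ∈ Θ,
        |piDens θ * gbar m θ - piDens θ * g θ| ≤ C / m * (piDens θ * g θ) := by
      intro θ hθ
      calc |piDens θ * gbar m θ - piDens θ * g θ| = piDens θ * |gbar m θ - g θ| := by
            rw [← mul_sub, abs_mul, abs_of_nonneg (hπ θ hθ)]
        _ ≤ piDens θ * (g θ * (C / m)) :=
            mul_le_mul_of_nonneg_left (happrox m hm1 θ hθ) (hπ θ hθ)
        _ = C / m * (piDens θ * g θ) := by ring
    calc J ≤ ∫ θ in Θ, C / m * (piDens θ * g θ) :=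
          setIntegral_mono_on'' hintd.abs (hint.const_mul _) h1
      _ = C / m * I := integral_const_mul _ _
  have hJnn : 0 ≤ J := integral_nonneg fun θ => abs_nonneg _
  have hdiff : |Im - I| ≤ C / m * I := by
    have h0 : Im - I = ∫ θ in Θ, (piDens θ * gbar m θ - piDens θ * g θ) :=
      (integral_sub (hintbar m) hint).symm
    rw [h0]
    have h2 := norm_integral_le_integral_norm (μ := volume.restrict Θ)
      (f := fun θ => piDens θ * gbar m θ - piDens θ * g θ)
    simp only [Real.norm_eq_abs] at h2
    exact le_trans h2 hJle
  have hCm : C / m * I ≤ I / 2 := by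
    have h1 : C / m ≤ 1 / 2 := by
      rw [div_le_div_iff₀ hmR (by norm_num : (0:ℝ) < 2)]
      linarith
    nlinarith [hpos]
  have hIm2 : I / 2 ≤ Im := by
    have := abs_le.mp hdiff
    linarith [this.1]
  -- main pointwise bound and integral comparison
  have hmain : (∫ θ in Θ,
        |piDens θ * gbar m θ / Im - piDens θ * g θ / I|)
      ≤ ∫ θ in Θ, (1 / Im * |piDens θ * gbar m θ - piDens θ * g θ|
          + |1 / Im - 1 / I| * (piDens θ * g θ)) := by
    refine setIntegral_mono_on'' ?_ ?_ ?_
    · exact (((hintbar m).div_const Im).sub (hint.div_const I)).abs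
    · exact (hintd.abs.const_mul _).add (hint.const_mul _)
    · intro θ hθ
      have key : piDens θ * gbar m θ / Im - piDens θ * g θ / I
          = 1 / Im * (piDens θ * gbar m θ - piDens θ * g θ)
            + (1 / Im - 1 / I) * (piDens θ * g θ) := by
        field_simp
        ring
      rw [key]
      calc |1 / Im * (piDens θ * gbar m θ - piDens θ * g θ)
              + (1 / Im - 1 / I) * (piDens θ * g θ)|
          ≤ |1 / Im * (piDens θ * gbar m θ - piDens θ * g θ)|
            + |(1 / Im - 1 / I) * (piDens θ * g θ)| := abs_add_le _ _
        _ = 1 / Im * |piDens θ * gbar m θ - piDens θ * g θ|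
            + |1 / Im - 1 / I| * (piDens θ * g θ) := by
            rw [abs_mul, abs_mul, abs_of_nonneg (by positivity : (0:ℝ) ≤ 1 / Im),
              abs_of_nonneg (mul_nonneg (hπ θ hθ) (hg θ hθ))]
  have hsplit : (∫ θ in Θ, (1 / Im * |piDens θ * gbar m θ - piDens θ * g θ|
          + |1 / Im - 1 / I| * (piDens θ * g θ)))
      = 1 / Im * J + |1 / Im - 1 / I| * I := by
    rw [integral_add (hintd.abs.const_mul _) (hint.const_mul _),
      integral_const_mul, integral_const_mul]
  have habs2 : |1 / Im - 1 / I| * I ≤ 2 * C / m := by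
    have e1 : 1 / Im - 1 / I = (I - Im) / (Im * I) := by
      field_simp
    have e2 : |1 / Im - 1 / I| * I = |Im - I| / Im := by
      rw [e1, abs_div, abs_of_pos (mul_pos hImpos hpos), ← abs_neg, neg_sub]
      field_simp
    rw [e2]
    calc |Im - I| / Im ≤ (C / m * I) / Im := by gcongr
      _ ≤ (C / m * I) / (I / 2) := by
          gcongr
      _ = 2 * C / m := by
          field_simp
  have ht1 : 1 / Im * J ≤ 2 * C / m := by
    calc 1 / Im * J ≤ 1 / Im * (C / m * I) := by
          exact mul_le_mul_of_nonneg_left hJle (by positivity)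
      _ ≤ 1 / (I / 2) * (C / m * I) := by
          have hnn : (0:ℝ) ≤ C / m * I := by positivity
          refine mul_le_mul_of_nonneg_right ?_ hnn
          gcongr
      _ = 2 * C / m := by
          field_simp
  calc (∫ θ in Θ, |piDens θ * gbar m θ / Im - piDens θ * g θ / I|)
      ≤ 1 / Im * J + |1 / Im - 1 / I| * I := by rw [← hsplit]; exact hmain
    _ ≤ 2 * C / m + 2 * C / m := add_le_add ht1 habs2
    _ = 4 * C / m := by ring
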